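/- Let G be the radius-k star with p ≥ 1 paths, where k ≥ 1 is odd. Then the differential chromatic number of G equals p·(k−1)/2 + 1. -/

import Mathlib

/-- A labeling of the vertices of a finite graph on `n` vertices: a one-to-one
assignment of the numbers `1, …, n` to the vertices. -/
def IsLabeling {V : Type*} [Fintype V] (c : V → ℕ) : Prop :=
  Function.Injective c ∧ ∀ v, c v ∈ Finset.Icc 1 (Fintype.card V)

/-- The differential value of the labeling `c` is at least `d`: every edge has
label difference at least `d`. -/
def DiffValAtLeast {V : Type*} (G : SimpleGraph V) (c : V → ℕ) (d : ℕ) : Prop :=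
  ∀ u v, G.Adj u v → d ≤ Nat.dist (c u) (c v)

/-- The differential chromatic number: the maximum, over all labelings, of the
minimum label difference over the edges. -/
noncomputable def diffChromNum {V : Type*} [Fintype V] (G : SimpleGraph V) : ℕ :=
  sSup {d : ℕ | ∃ c : V → ℕ, IsLabeling c ∧ DiffValAtLeast G c d}

/-- The spider graph with center `none` and `p` attached paths, the `i`-th path
having `ℓ i` vertices `some ⟨i, j⟩` (the vertex `some ⟨i, j⟩` is at level `j + 1`,
i.e. at distance `j + 1` from the center). -/
def spider (p : ℕ) (ℓ : Fin p → ℕ) : SimpleGraph (Option (Σ i : Fin p, Fin (ℓ i))) :=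
  SimpleGraph.fromRel (fun a b =>
    (a = none ∧ ∃ (i : Fin p) (h : 0 < ℓ i), b = some ⟨i, ⟨0, h⟩⟩) ∨
    (∃ (i : Fin p) (x y : Fin (ℓ i)), (x : ℕ) + 1 = (y : ℕ) ∧
      a = some ⟨i, x⟩ ∧ b = some ⟨i, y⟩))

/-- The number of vertices of the spider at even positive level (the vertex
`some ⟨i, j⟩` is at level `j + 1`). -/
def spiderNe (p : ℕ) (ℓ : Fin p → ℕ) : ℕ :=
  (Finset.univ.filter (fun v : Σ i : Fin p, Fin (ℓ i) => (v.2 : ℕ) % 2 = 1)).card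

/-- The number of vertices of the spider at odd level. -/
def spiderNo (p : ℕ) (ℓ : Fin p → ℕ) : ℕ :=
  (Finset.univ.filter (fun v : Σ i : Fin p, Fin (ℓ i) => (v.2 : ℕ) % 2 = 0)).card


/-!
If every edge has label difference at least `d`, the vertices whose labels lie in a window of `d`
consecutive values containing the label of the center form an independent set through the center.
Such a set meets a leg with `ℓ` vertices in at most `⌊ℓ/2⌋` of them, so `d ≤ p(k-1)/2 + 1`.

Conversely, index the vertices of each leg by their distance `r` to its free end. Giving the
vertices with `r` odd the labels `1, …, pm` (where `k = 2m + 1`), the center `pm + 1`, and the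
vertices with `r` even the labels above, both ordered by `⌊r/2⌋` and then by leg, makes every edge
have label difference at least `pm + 1`.
-/

lemma Nat.eq_and_eq_of_mul_add_eq {p q q' i i' : ℕ} (hi : i < p) (hi' : i' < p)
    (h : q * p + i = q' * p + i') : q = q' ∧ i = i' := by
  have hp : 0 < p := by omega
  obtain ⟨hq, hr⟩ :=
    (Nat.div_mod_unique (a := q * p + i) (d := q) (c := i) hp).2 ⟨by ring, hi⟩
  obtain ⟨hq', hr'⟩ :=
    (Nat.div_mod_unique (a := q' * p + i') (d := q') (c := i') hp).2 ⟨by ring, hi'⟩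
  rw [h] at hq hr
  exact ⟨hq.symm.trans hq', hr.symm.trans hr'⟩

section Labeling

variable {V : Type*} {G : SimpleGraph V} {c : V → ℕ} {d : ℕ}

lemma DiffValAtLeast.mono {d' : ℕ} (h : DiffValAtLeast G c d) (hd : d' ≤ d) :
    DiffValAtLeast G c d' :=
  fun u v huv => hd.trans (h u v huv)

lemma DiffValAtLeast.of_fromRel {r : V → V → Prop} (h : ∀ u v, r u v → d ≤ Nat.dist (c u) (c v)) :
    DiffValAtLeast (SimpleGraph.fromRel r) c d := by
  rintro u v ⟨-, huv | hvu⟩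
  · exact h u v huv
  · rw [Nat.dist_comm]
    exact h v u hvu

lemma diffChromNum_eq [Fintype V] (hlow : ∃ c, IsLabeling c ∧ DiffValAtLeast G c d)
    (hup : ∀ c, IsLabeling c → ¬ DiffValAtLeast G c (d + 1)) : diffChromNum G = d := by
  refine IsGreatest.csSup_eq ⟨hlow, ?_⟩
  rintro e ⟨c, hc, he⟩
  by_contra! hde
  exact hup c hc (he.mono hde)

lemma IsLabeling.image_univ [Fintype V] (hc : IsLabeling c) :
    Finset.univ.image c = Finset.Icc 1 (Fintype.card V) := by
  refine Finset.eq_of_subset_of_card_le ?_ ?_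
  · intro x hx
    obtain ⟨v, -, rfl⟩ := Finset.mem_image.1 hx
    exact hc.2 v
  · rw [Nat.card_Icc, Finset.card_image_of_injective _ hc.1, Finset.card_univ]
    omega

theorem IsLabeling.exists_indepSet [Fintype V] (hc : IsLabeling c) (hd : DiffValAtLeast G c d)
    (hd0 : 0 < d) (hdn : d ≤ Fintype.card V) (v : V) :
    ∃ s : Finset V, v ∈ s ∧ G.IsIndepSet s ∧ s.card = d := by
  set a := min (c v) (Fintype.card V + 1 - d)
  have hv := Finset.mem_Icc.1 (hc.2 v)
  have himage : (Finset.univ.filter fun u => c u ∈ Finset.Ico a (a + d)).image c =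
      Finset.Ico a (a + d) := by
    rw [← Finset.filter_image (p := (· ∈ Finset.Ico a (a + d))), hc.image_univ,
      Finset.filter_mem_eq_inter, Finset.inter_eq_right]
    intro x hx
    simp only [Finset.mem_Ico, Finset.mem_Icc] at hx ⊢
    omega
  refine ⟨Finset.univ.filter fun u => c u ∈ Finset.Ico a (a + d), ?_, ?_, ?_⟩
  · simp only [Finset.mem_filter, Finset.mem_univ, Finset.mem_Ico, true_and]
    omega
  · intro u hu w hw _ huw
    have := hd u w huw
    simp only [Finset.coe_filter, Finset.mem_univ, Finset.mem_Ico, true_and,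
      Set.mem_ofPred_eq] at hu hw
    unfold Nat.dist at this
    omega
  · rw [← Finset.card_image_of_injective _ hc.1, himage, Nat.card_Ico]
    omega

end Labeling

section Spider

variable {p : ℕ} {ℓ : Fin p → ℕ}

lemma spider_adj_none (i : Fin p) (h : 0 < ℓ i) : (spider p ℓ).Adj none (some ⟨i, ⟨0, h⟩⟩) := by
  rw [spider, SimpleGraph.fromRel_adj]
  exact ⟨by simp, .inl (.inl ⟨rfl, i, h, rfl⟩)⟩

lemma spider_adj_some {i : Fin p} {x y : Fin (ℓ i)} (h : (x : ℕ) + 1 = y) :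
    (spider p ℓ).Adj (some ⟨i, x⟩) (some ⟨i, y⟩) := by
  rw [spider, SimpleGraph.fromRel_adj]
  refine ⟨?_, .inl (.inr ⟨i, x, y, h, rfl, rfl⟩)⟩
  intro hxy
  simp only [Option.some.injEq, Sigma.mk.inj_iff, heq_eq_eq, true_and] at hxy
  omega

theorem spider_indepSet_card_le {s : Finset (Option (Σ i : Fin p, Fin (ℓ i)))}
    (hs : (spider p ℓ).IsIndepSet s) (hnone : none ∈ s) : s.card ≤ ∑ i, ℓ i / 2 + 1 := by
  have hpos : ∀ i (j : Fin (ℓ i)), some ⟨i, j⟩ ∈ s → 0 < (j : ℕ) := by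
    intro i j hj
    by_contra! h0
    have : j = ⟨0, j.pos⟩ := Fin.ext (Nat.le_zero.1 h0)
    rw [this] at hj
    exact hs hnone hj (by simp) (spider_adj_none i _)
  have hsucc : ∀ i (x y : Fin (ℓ i)), some ⟨i, x⟩ ∈ s → some ⟨i, y⟩ ∈ s → (x : ℕ) + 1 ≠ y :=
    fun i x y hx hy h => hs hx hy (spider_adj_some h).ne (spider_adj_some h)
  -- Positions `2t + 1` and `2t + 2` of a leg share the slot `t`; `s` uses each slot at most once.
  let slot : Option (Σ i : Fin p, Fin (ℓ i)) → Option (Σ _ : Fin p, ℕ) :=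
    Option.map fun v => ⟨v.1, (v.2 - 1) / 2⟩
  let slots := insert none ((Finset.univ.sigma fun i => Finset.range (ℓ i / 2)).image some)
  have hmaps : Set.MapsTo slot s slots := by
    rintro (_ | ⟨i, j⟩) hv
    · simp [slot, slots]
    · have hslot : (j - 1 : ℕ) / 2 < ℓ i / 2 := by have := hpos i j hv; omega
      exact Finset.mem_insert_of_mem <| Finset.mem_image_of_mem some <|
        Finset.mem_sigma.2 ⟨Finset.mem_univ i, Finset.mem_range.2 hslot⟩
  have hinj : Set.InjOn slot s := by
    rintro (_ | ⟨i, x⟩) hx (_ | ⟨i', y⟩) hy h <;> simp only [slot, Option.map_some,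
      Option.map_none, Option.some.injEq, Sigma.mk.inj_iff, heq_eq_eq, reduceCtorEq] at h
    · rfl
    · obtain ⟨rfl, h⟩ := h
      have := hpos i x hx
      have := hpos i y hy
      have := hsucc i x y hx hy
      have := hsucc i y x hy hx
      obtain rfl : x = y := Fin.ext (by omega)
      rfl
  calc s.card ≤ slots.card := Finset.card_le_card_of_injOn slot hmaps hinj
    _ ≤ ∑ i, ℓ i / 2 + 1 := by
      refine (Finset.card_insert_le _ _).trans ?_
      rw [Finset.card_image_of_injective _ (Option.some_injective _), Finset.card_sigma]
      simp

theorem spider_diffVal_le {c : Option (Σ i : Fin p, Fin (ℓ i)) → ℕ} {d : ℕ} (hc : IsLabeling c)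
    (hd : DiffValAtLeast (spider p ℓ) c d)
    (hdn : d ≤ Fintype.card (Option (Σ i : Fin p, Fin (ℓ i)))) : d ≤ ∑ i, ℓ i / 2 + 1 := by
  rcases Nat.eq_zero_or_pos d with rfl | hd0
  · exact Nat.zero_le _
  obtain ⟨s, hnone, hs, rfl⟩ := hc.exists_indepSet hd hd0 hdn none
  exact spider_indepSet_card_le hs hnone

end Spider

section OddLegs

variable (p m : ℕ)

def legLabel (i r : ℕ) : ℕ := r / 2 * p + i + 1 + if r % 2 = 0 then m * p + 1 else 0

variable {p m}

lemma legLabel_le_of_odd {i r : ℕ} (hi : i < p) (hr : r ≤ 2 * m) (hodd : r % 2 = 1) :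
    legLabel p m i r ≤ m * p := by
  have := Nat.mul_le_mul_right p (show r / 2 + 1 ≤ m by omega)
  rw [add_mul, one_mul] at this
  rw [legLabel, if_neg (by omega)]
  omega

lemma legLabel_mem_of_even {i r : ℕ} (hi : i < p) (hr : r ≤ 2 * m) (heven : r % 2 = 0) :
    m * p + 2 ≤ legLabel p m i r ∧ legLabel p m i r ≤ 2 * (m * p) + p + 1 := by
  have := Nat.mul_le_mul_right p (show r / 2 ≤ m by omega)
  rw [legLabel, if_pos heven]
  omega

lemma legLabel_ne_center {i r : ℕ} (hi : i < p) (hr : r ≤ 2 * m) :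
    legLabel p m i r ≠ m * p + 1 := by
  rcases Nat.mod_two_eq_zero_or_one r with h | h
  · have := legLabel_mem_of_even hi hr h
    omega
  · have := legLabel_le_of_odd hi hr h
    omega

lemma legLabel_inj {i i' r r' : ℕ} (hi : i < p) (hi' : i' < p) (hr : r ≤ 2 * m)
    (hr' : r' ≤ 2 * m) (h : legLabel p m i r = legLabel p m i' r') : i = i' ∧ r = r' := by
  have hpar : r % 2 = r' % 2 := by
    rcases Nat.mod_two_eq_zero_or_one r with h0 | h0 <;>
    rcases Nat.mod_two_eq_zero_or_one r' with h1 | h1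
    all_goals first
      | omega
      | have := legLabel_le_of_odd hi hr h0; have := legLabel_mem_of_even hi' hr' h1; omega
      | have := legLabel_mem_of_even hi hr h0; have := legLabel_le_of_odd hi' hr' h1; omega
  have hkey : r / 2 * p + i = r' / 2 * p + i' := by
    simp only [legLabel, hpar] at h
    omega
  obtain ⟨hq, rfl⟩ := Nat.eq_and_eq_of_mul_add_eq hi hi' hkey
  exact ⟨rfl, by omega⟩

lemma legLabel_dist_succ (i r : ℕ) :
    m * p + 1 ≤ Nat.dist (legLabel p m i (r + 1)) (legLabel p m i r) := by
  unfold Nat.dist legLabel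
  rcases Nat.mod_two_eq_zero_or_one r with h | h
  · rw [show (r + 1) / 2 = r / 2 by omega, if_neg (by omega), if_pos h]
    omega
  · rw [show (r + 1) / 2 = r / 2 + 1 by omega, if_pos (by omega), if_neg (by omega), add_mul,
      one_mul]
    omega

lemma legLabel_two_mul (i : ℕ) : legLabel p m i (2 * m) = m * p + 1 + (m * p + i + 1) := by
  simp only [legLabel, Nat.mul_mod_right, if_true, Nat.mul_div_cancel_left m two_pos]
  omega

variable (p m)

-- `2 * m - j` is the distance of `some ⟨i, j⟩` from the free end of its leg.
def oddSpiderLabel : Option (Σ _ : Fin p, Fin (2 * m + 1)) → ℕ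
  | none => m * p + 1
  | some ⟨i, j⟩ => legLabel p m i (2 * m - j)

lemma card_oddSpider :
    Fintype.card (Option (Σ _ : Fin p, Fin (2 * m + 1))) = 2 * (m * p) + p + 1 := by
  simp only [Fintype.card_option, Fintype.card_sigma, Fintype.card_fin, Finset.sum_const,
    Finset.card_univ, smul_eq_mul]
  ring

lemma oddSpiderLabel_isLabeling : IsLabeling (oddSpiderLabel p m) := by
  refine ⟨?_, ?_⟩
  · rintro (_ | ⟨i, j⟩) (_ | ⟨i', j'⟩) h
    · rfl
    · exact absurd h.symm (legLabel_ne_center i'.isLt (Nat.sub_le _ _))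
    · exact absurd h (legLabel_ne_center i.isLt (Nat.sub_le _ _))
    · obtain ⟨hii, hjj⟩ := legLabel_inj i.isLt i'.isLt (Nat.sub_le _ _) (Nat.sub_le _ _) h
      obtain rfl := Fin.ext hii
      have hj : (j : ℕ) < 2 * m + 1 := j.isLt
      have hj' : (j' : ℕ) < 2 * m + 1 := j'.isLt
      obtain rfl : j = j' := Fin.ext (by omega)
      rfl
  · rintro (_ | ⟨i, j⟩)
    · simp only [oddSpiderLabel, card_oddSpider, Finset.mem_Icc]
      omega
    · simp only [oddSpiderLabel, card_oddSpider, Finset.mem_Icc]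
      rcases Nat.mod_two_eq_zero_or_one (2 * m - j) with h | h
      · have := legLabel_mem_of_even i.isLt (Nat.sub_le _ _) h
        omega
      · have := legLabel_le_of_odd i.isLt (Nat.sub_le _ _) h
        have : 0 < legLabel p m i (2 * m - j) := by unfold legLabel; omega
        omega

lemma oddSpiderLabel_diffVal :
    DiffValAtLeast (spider p fun _ => 2 * m + 1) (oddSpiderLabel p m) (m * p + 1) := by
  refine DiffValAtLeast.of_fromRel ?_
  rintro u v (⟨rfl, i, h, rfl⟩ | ⟨i, x, y, hxy, rfl, rfl⟩)
  · simp only [oddSpiderLabel, Nat.sub_zero, legLabel_two_mul, Nat.dist]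
    omega
  · have hy : (y : ℕ) < 2 * m + 1 := y.isLt
    simp only [oddSpiderLabel]
    rw [show 2 * m - x = 2 * m - y + 1 by omega]
    exact legLabel_dist_succ _ _

end OddLegs

theorem stmt_11_general (p k : ℕ) (hp : 1 ≤ p) (hko : Odd k) :
    diffChromNum (spider p (fun _ => k)) = p * (k - 1) / 2 + 1 := by
  obtain ⟨m, rfl⟩ := hko
  have hval : p * (2 * m + 1 - 1) / 2 = m * p := by
    rw [Nat.add_sub_cancel, mul_left_comm, Nat.mul_div_cancel_left _ two_pos, mul_comm]
  rw [hval]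
  refine diffChromNum_eq ⟨_, oddSpiderLabel_isLabeling p m, oddSpiderLabel_diffVal p m⟩ ?_
  intro c hc hd
  have hlegs : ∑ _ : Fin p, (2 * m + 1) / 2 = m * p := by
    rw [show (2 * m + 1) / 2 = m by omega, Finset.sum_const, Finset.card_univ, Fintype.card_fin,
      smul_eq_mul, mul_comm]
  have := spider_diffVal_le hc hd (by rw [card_oddSpider]; omega)
  omega

/-- The radius-`k` star with `p ≥ 1` paths (each attached path having exactly `k`
vertices), where `k ≥ 1` is odd, has differential chromatic number `p·(k−1)/2 + 1`. -/
theorem stmt_11 (p k : ℕ) (hp : 1 ≤ p) (hk : 1 ≤ k) (hko : Odd k) :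
    diffChromNum (spider p (fun _ => k)) = p * (k - 1) / 2 + 1 :=
  stmt_11_general p k hp hko
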